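/- With Σ^{CRS} = (1/|G|)·Σ_{g∈G} |g⟩⟨g|^C ⊗ U_g^R τ (U_g^R)† ⊗ U_g^S σ (U_g^S)† as above, the conditional mutual information satisfies I(C:S|R)_Σ = Γ(τ ⊗ σ) - Γ(τ), where Γ is the relative entropy of asymmetry with respect to G (with the representation g ↦ U_g^R ⊗ U_g^S on R⊗S). -/

import Mathlib

open Matrix
open scoped Kronecker ComplexOrder
open scoped Classical

variable {n : Type*} [Fintype n] [DecidableEq n]

/-- Density matrix predicate -/
def IsDensityMatrix (ρ : Matrix n n ℂ) : Prop := ρ.PosSemidef ∧ ρ.trace = 1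

/-- von Neumann entropy, base 2 -/
noncomputable def vnEntropy (A : Matrix n n ℂ) : ℝ :=
  if h : A.IsHermitian then -∑ i, h.eigenvalues i * Real.logb 2 (h.eigenvalues i) else 0

/-- twirl over a finite group -/
noncomputable def twirl {G : Type*} [Group G] [Fintype G]
    (U : G →* Matrix.unitaryGroup n ℂ) (ρ : Matrix n n ℂ) : Matrix n n ℂ :=
  (Fintype.card G : ℂ)⁻¹ • ∑ g : G, (U g : Matrix n n ℂ) * ρ * star (U g : Matrix n n ℂ)

/-- relative entropy of asymmetry -/
noncomputable def relEntAsym {G : Type*} [Group G] [Fintype G]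
    (U : G →* Matrix.unitaryGroup n ℂ) (ρ : Matrix n n ℂ) : ℝ :=
  vnEntropy (twirl U ρ) - vnEntropy ρ

/-- the old Mathlib `Matrix.PosSemidef.sqrt` (removed upstream), restored with its old definition -/
noncomputable def Matrix.PosSemidef.sqrt {A : Matrix n n ℂ} (hA : A.PosSemidef) : Matrix n n ℂ :=
  hA.1.eigenvectorUnitary.1 * diagonal ((↑) ∘ (fun x : ℝ => Real.sqrt x) ∘ hA.1.eigenvalues) *
    (star hA.1.eigenvectorUnitary : Matrix n n ℂ)

/-- square root of a PSD matrix (0 otherwise) -/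
noncomputable def sqrtPSD (A : Matrix n n ℂ) : Matrix n n ℂ :=
  if h : A.PosSemidef then h.sqrt else 0

/-- trace norm -/
noncomputable def traceNorm (A : Matrix n n ℂ) : ℝ :=
  ((Matrix.posSemidef_conjTranspose_mul_self A).sqrt.trace).re

/-- fidelity F(ρ,σ) = ‖√ρ√σ‖₁ -/
noncomputable def fidelity (ρ σ : Matrix n n ℂ) : ℝ := traceNorm (sqrtPSD ρ * sqrtPSD σ)

/-- binary entropy, base 2 -/
noncomputable def binEntropy2 (x : ℝ) : ℝ := -x * Real.logb 2 x - (1-x) * Real.logb 2 (1-x)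

/-- matrix logarithm (base 2) of a Hermitian matrix -/
noncomputable def matLogb (A : Matrix n n ℂ) : Matrix n n ℂ :=
  if h : A.IsHermitian then
    (h.eigenvectorUnitary : Matrix n n ℂ) *
      Matrix.diagonal (fun i => (Real.logb 2 (h.eigenvalues i) : ℂ)) *
      star (h.eigenvectorUnitary : Matrix n n ℂ)
  else 0

/-- quantum relative entropy, +∞ if support condition fails -/
noncomputable def relEntropy (ρ σ : Matrix n n ℂ) : EReal :=
  if ∀ v : n → ℂ, σ *ᵥ v = 0 → ρ *ᵥ v = 0 then
    (((ρ * (matLogb ρ - matLogb σ)).trace).re : EReal)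
  else ⊤

/-- complete positivity -/
def IsCompletelyPositive {m : Type*} [Fintype m] [DecidableEq m]
    (Φ : Matrix n n ℂ →ₗ[ℂ] Matrix m m ℂ) : Prop :=
  ∀ (k : ℕ) (M : Matrix (Fin k × n) (Fin k × n) ℂ), M.PosSemidef →
    (Matrix.of fun p q : Fin k × m =>
      (Φ (Matrix.of fun a b => M (p.1, a) (q.1, b))) p.2 q.2).PosSemidef

/-- CPTP map -/
def IsQuantumChannel {m : Type*} [Fintype m] [DecidableEq m]
    (Φ : Matrix n n ℂ →ₗ[ℂ] Matrix m m ℂ) : Prop :=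
  IsCompletelyPositive Φ ∧ ∀ A, (Φ A).trace = A.trace

/-- G-covariance of a map between systems with representations U, V -/
def IsCovariant {m : Type*} [Fintype m] [DecidableEq m] {G : Type*} [Group G]
    (U : G →* Matrix.unitaryGroup n ℂ) (V : G →* Matrix.unitaryGroup m ℂ)
    (Φ : Matrix n n ℂ →ₗ[ℂ] Matrix m m ℂ) : Prop :=
  ∀ g A, Φ ((U g : Matrix n n ℂ) * A * star (U g : Matrix n n ℂ))
    = (V g : Matrix m m ℂ) * Φ A * star (V g : Matrix m m ℂ)

/-- the classical-quantum state Σ^{CRS} -/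
noncomputable def SigmaCRS {nR nS G : Type*} [Fintype nR] [DecidableEq nR] [Fintype nS] [DecidableEq nS]
    [Group G] [Fintype G] [DecidableEq G]
    (U : G →* Matrix.unitaryGroup nR ℂ) (V : G →* Matrix.unitaryGroup nS ℂ)
    (τ : Matrix nR nR ℂ) (σ : Matrix nS nS ℂ) :
    Matrix (G × nR × nS) (G × nR × nS) ℂ :=
  Matrix.of fun x y =>
    if x.1 = y.1 then
      (Fintype.card G : ℂ)⁻¹
        * (((U x.1 : Matrix nR nR ℂ) * τ * star (U x.1 : Matrix nR nR ℂ)) x.2.1 y.2.1)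
        * (((V x.1 : Matrix nS nS ℂ) * σ * star (V x.1 : Matrix nS nS ℂ)) x.2.2 y.2.2)
    else 0

/-!
Both `Σ^{CRS}` and its marginal `Σ^{CR}` are block diagonal in the classical register `C`, with
blocks `|G|⁻¹ • W_g (τ ⊗ σ) W_g†`, resp. `|G|⁻¹ • U_g τ U_g†`. Since the spectrum of a Hermitian
matrix is read off its characteristic polynomial, which is multiplicative over blocks and
invariant under unitary conjugation, each of these has entropy `log |G|` plus that of `τ ⊗ σ`,
resp. `τ`. The other two marginals are exactly the twirls `𝒢(τ ⊗ σ)` and `𝒢(τ)`, so the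
`log |G|` terms cancel and what remains is `Γ(τ ⊗ σ) - Γ(τ)`.
-/

open Polynomial in
theorem Matrix.charpoly_blockDiagonal {m o R : Type*} [Fintype m] [DecidableEq m] [Fintype o]
    [DecidableEq o] [CommRing R] (M : o → Matrix m m R) :
    (blockDiagonal M).charpoly = ∏ k, (M k).charpoly := by
  have hchar : charmatrix (blockDiagonal M) = blockDiagonal fun k => charmatrix (M k) := by
    ext ⟨i, k⟩ ⟨j, k'⟩
    by_cases hk : k = k' <;> by_cases hij : i = j <;>
      simp [charmatrix, blockDiagonal_apply, hk, hij]
  rw [charpoly, hchar, det_blockDiagonal]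
  rfl

theorem Matrix.charpoly_unitary_conj {m R : Type*} [Fintype m] [DecidableEq m] [CommRing R]
    [StarRing R] (U : unitaryGroup m R) (A : Matrix m m R) :
    ((U : Matrix m m R) * A * star (U : Matrix m m R)).charpoly = A.charpoly := by
  rw [charpoly_mul_comm, ← Matrix.mul_assoc, UnitaryGroup.star_mul_self, Matrix.one_mul]

theorem Matrix.kronecker_mul_mul_star {l m R : Type*} [Fintype l] [Fintype m] [CommSemiring R]
    [StarRing R] (A τ : Matrix l l R) (B σ : Matrix m m R) :
    (A ⊗ₖ B) * (τ ⊗ₖ σ) * star (A ⊗ₖ B) = (A * τ * star A) ⊗ₖ (B * σ * star B) := by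
  simp only [star_eq_conjTranspose, conjTranspose_kronecker, mul_kronecker_mul]

theorem Matrix.trace_unitary_conj {m R : Type*} [Fintype m] [DecidableEq m] [CommRing R]
    [StarRing R] (U : unitaryGroup m R) (A : Matrix m m R) :
    ((U : Matrix m m R) * A * star (U : Matrix m m R)).trace = A.trace := by
  rw [trace_mul_cycle, UnitaryGroup.star_mul_self, Matrix.one_mul]

theorem sum_diag_unitary_conj {ρ : Matrix n n ℂ} (hρ : ρ.trace = 1) (U : unitaryGroup n ℂ) :
    ∑ i, ((U : Matrix n n ℂ) * ρ * star (U : Matrix n n ℂ)) i i = 1 := by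
  rw [← hρ, ← trace_unitary_conj U ρ]
  rfl

theorem vnEntropy_eq_neg_sum_roots {A : Matrix n n ℂ} (hA : A.IsHermitian) :
    vnEntropy A = -(A.charpoly.roots.map fun z : ℂ => z.re * Real.logb 2 z.re).sum := by
  rw [vnEntropy, dif_pos hA, hA.roots_charpoly_eq_eigenvalues, Multiset.map_map,
    Finset.sum_eq_multiset_sum]
  simp [Function.comp_def]

theorem vnEntropy_eq_of_charpoly_eq {m : Type*} [Fintype m] [DecidableEq m]
    {A : Matrix n n ℂ} {B : Matrix m m ℂ} (hA : A.IsHermitian) (hB : B.IsHermitian)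
    (h : A.charpoly = B.charpoly) : vnEntropy A = vnEntropy B := by
  rw [vnEntropy_eq_neg_sum_roots hA, vnEntropy_eq_neg_sum_roots hB, h]

theorem vnEntropy_reindex {m : Type*} [Fintype m] [DecidableEq m] (e : n ≃ m)
    (A : Matrix n n ℂ) : vnEntropy (reindex e e A) = vnEntropy A := by
  by_cases hA : A.IsHermitian
  · exact vnEntropy_eq_of_charpoly_eq (hA.submatrix _) hA (charpoly_reindex e A)
  · have hA' : ¬ (reindex e e A).IsHermitian := by
      rwa [reindex_apply, isHermitian_submatrix_equiv]
    rw [vnEntropy, vnEntropy, dif_neg hA, dif_neg hA']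

theorem vnEntropy_unitary_conj {A : Matrix n n ℂ} (hA : A.IsHermitian)
    (U : unitaryGroup n ℂ) :
    vnEntropy ((U : Matrix n n ℂ) * A * star (U : Matrix n n ℂ)) = vnEntropy A :=
  vnEntropy_eq_of_charpoly_eq (isHermitian_mul_mul_conjTranspose _ hA) hA
    (charpoly_unitary_conj U A)

theorem vnEntropy_blockDiagonal {o : Type*} [Fintype o] [DecidableEq o]
    (M : o → Matrix n n ℂ) (hM : ∀ k, (M k).IsHermitian) :
    vnEntropy (blockDiagonal M) = ∑ k, vnEntropy (M k) := by
  have hprod : ∏ k, (M k).charpoly ≠ 0 :=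
    Finset.prod_ne_zero_iff.2 fun k _ => (M k).charpoly_monic.ne_zero
  rw [vnEntropy_eq_neg_sum_roots (isHermitian_blockDiagonal_iff.2 hM), charpoly_blockDiagonal,
    Polynomial.roots_prod _ _ hprod, Multiset.map_bind, Multiset.sum_bind,
    Finset.sum_eq_multiset_sum, ← Multiset.sum_map_neg]
  congr 1
  exact Multiset.map_congr rfl fun k _ => (vnEntropy_eq_neg_sum_roots (hM k)).symm

open Polynomial in
theorem Matrix.IsHermitian.roots_charpoly_real_smul {A : Matrix n n ℂ} (hA : A.IsHermitian)
    (c : ℝ) : ((c : ℂ) • A).charpoly.roots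
      = Finset.univ.val.map fun i => ((c * hA.eigenvalues i : ℝ) : ℂ) := by
  conv_lhs => rw [hA.spectral_theorem, Unitary.conjStarAlgAut_apply, ← smul_mul_assoc,
    ← mul_smul_comm, charpoly_unitary_conj, ← diagonal_smul]
  rw [charpoly_diagonal, roots_prod _ _ (Finset.prod_ne_zero_iff.2 fun i _ => X_sub_C_ne_zero _)]
  simp only [Pi.smul_apply, Function.comp_apply, roots_X_sub_C, Multiset.bind_singleton]
  push_cast
  rfl

theorem Real.mul_logb_mul (b c x : ℝ) :
    c * x * Real.logb b (c * x) = c * (x * Real.logb b x) + c * Real.logb b c * x := by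
  rcases eq_or_ne c 0 with rfl | hc
  · simp
  rcases eq_or_ne x 0 with rfl | hx
  · simp
  rw [Real.logb_mul hc hx]
  ring

theorem vnEntropy_real_smul {ρ : Matrix n n ℂ} (hρ : ρ.IsHermitian) (htr : ρ.trace = 1)
    (c : ℝ) : vnEntropy ((c : ℂ) • ρ) = c * vnEntropy ρ - c * Real.logb 2 c := by
  have hsum : ∑ i, hρ.eigenvalues i = 1 := by
    apply Complex.ofReal_injective
    simpa using hρ.trace_eq_sum_eigenvalues.symm.trans htr
  rw [vnEntropy_eq_neg_sum_roots (hρ.smul (Complex.conj_ofReal c)), hρ.roots_charpoly_real_smul,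
    Multiset.map_map, ← Finset.sum_eq_multiset_sum]
  simp only [Function.comp_apply, Complex.ofReal_re, Real.mul_logb_mul, Finset.sum_add_distrib,
    ← Finset.mul_sum, hsum, vnEntropy, dif_pos hρ]
  ring

theorem vnEntropy_blockDiagonal_uniform_conj {ι : Type*} [Fintype ι] [DecidableEq ι]
    [Nonempty ι] {ρ : Matrix n n ℂ} (hρ : ρ.IsHermitian) (htr : ρ.trace = 1)
    (W : ι → unitaryGroup n ℂ) :
    vnEntropy (blockDiagonal fun i =>
        (Fintype.card ι : ℂ)⁻¹ • ((W i : Matrix n n ℂ) * ρ * star (W i : Matrix n n ℂ)))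
      = Real.logb 2 (Fintype.card ι) + vnEntropy ρ := by
  set c : ℝ := (Fintype.card ι : ℝ)⁻¹
  have hcρ : ((c : ℂ) • ρ).IsHermitian := hρ.smul (Complex.conj_ofReal c)
  have hblock : ∀ i, (Fintype.card ι : ℂ)⁻¹ •
      ((W i : Matrix n n ℂ) * ρ * star (W i : Matrix n n ℂ))
      = (W i : Matrix n n ℂ) * ((c : ℂ) • ρ) * star (W i : Matrix n n ℂ) := by
    intro i
    rw [mul_smul_comm, smul_mul_assoc]
    push_cast [c]
    rfl
  simp_rw [hblock]
  have hblocks : ∀ i,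
      ((W i : Matrix n n ℂ) * ((c : ℂ) • ρ) * star (W i : Matrix n n ℂ)).IsHermitian :=
    fun i => isHermitian_mul_mul_conjTranspose _ hcρ
  rw [vnEntropy_blockDiagonal _ hblocks]
  simp_rw [vnEntropy_unitary_conj hcρ, vnEntropy_real_smul hρ htr]
  have hcardc : (Fintype.card ι : ℝ) * c = 1 :=
    mul_inv_cancel₀ (Nat.cast_ne_zero.2 Fintype.card_ne_zero)
  rw [Finset.sum_const, Finset.card_univ, nsmul_eq_mul, Real.logb_inv]
  linear_combination (vnEntropy ρ + Real.logb 2 (Fintype.card ι)) * hcardc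

section SigmaCRS

variable {nR nS G : Type*} [Fintype nR] [DecidableEq nR] [Fintype nS] [DecidableEq nS]
  [Group G] [Fintype G] [DecidableEq G]
  (U : G →* unitaryGroup nR ℂ) (V : G →* unitaryGroup nS ℂ) (τ : Matrix nR nR ℂ)
  {σ : Matrix nS nS ℂ}

theorem sigmaCRS_eq_reindex_blockDiagonal (W : G →* unitaryGroup (nR × nS) ℂ)
    (hW : ∀ g : G, (W g : Matrix (nR × nS) (nR × nS) ℂ)
      = (U g : Matrix nR nR ℂ) ⊗ₖ (V g : Matrix nS nS ℂ)) :
    SigmaCRS U V τ σ = reindex (Equiv.prodComm _ _) (Equiv.prodComm _ _)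
      (blockDiagonal fun g => (Fintype.card G : ℂ)⁻¹ •
        ((W g : Matrix (nR × nS) (nR × nS) ℂ) * (τ ⊗ₖ σ) * star (W g : Matrix _ _ ℂ))) := by
  simp_rw [hW, kronecker_mul_mul_star]
  ext ⟨g, r, s⟩ ⟨g', r', s'⟩
  by_cases h : g = g'
  · subst h
    simp [SigmaCRS, blockDiagonal_apply, mul_assoc]
  · simp [SigmaCRS, blockDiagonal_apply, h]

theorem sigmaCRS_marginal_CR (hσ : σ.trace = 1) :
    (Matrix.of fun p q : G × nR => ∑ s : nS, SigmaCRS U V τ σ (p.1, p.2, s) (q.1, q.2, s))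
      = reindex (Equiv.prodComm _ _) (Equiv.prodComm _ _)
        (blockDiagonal fun g => (Fintype.card G : ℂ)⁻¹ •
          ((U g : Matrix nR nR ℂ) * τ * star (U g : Matrix nR nR ℂ))) := by
  ext ⟨g, r⟩ ⟨g', r'⟩
  by_cases h : g = g'
  · subst h
    simp [SigmaCRS, blockDiagonal_apply, ← Finset.mul_sum, sum_diag_unitary_conj hσ]
  · simp [SigmaCRS, blockDiagonal_apply, h]

theorem sigmaCRS_marginal_RS (W : G →* unitaryGroup (nR × nS) ℂ)
    (hW : ∀ g : G, (W g : Matrix (nR × nS) (nR × nS) ℂ)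
      = (U g : Matrix nR nR ℂ) ⊗ₖ (V g : Matrix nS nS ℂ)) :
    (Matrix.of fun p q : nR × nS => ∑ g : G, SigmaCRS U V τ σ (g, p.1, p.2) (g, q.1, q.2))
      = twirl W (τ ⊗ₖ σ) := by
  simp_rw [twirl, hW, kronecker_mul_mul_star]
  ext p q
  simp [SigmaCRS, Matrix.sum_apply, Finset.mul_sum, mul_assoc]

theorem sigmaCRS_marginal_R (hσ : σ.trace = 1) :
    (Matrix.of fun r r' : nR => ∑ g : G, ∑ s : nS, SigmaCRS U V τ σ (g, r, s) (g, r', s))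
      = twirl U τ := by
  ext r r'
  simp [SigmaCRS, twirl, Matrix.sum_apply, ← Finset.mul_sum, sum_diag_unitary_conj hσ]

end SigmaCRS

theorem condMutualInfo_eq_deltaGamma {nR nS G : Type*} [Fintype nR] [DecidableEq nR]
    [Fintype nS] [DecidableEq nS] [Group G] [Fintype G] [DecidableEq G]
    (U : G →* Matrix.unitaryGroup nR ℂ) (V : G →* Matrix.unitaryGroup nS ℂ)
    (W : G →* Matrix.unitaryGroup (nR × nS) ℂ)
    (hW : ∀ g : G, (W g : Matrix (nR × nS) (nR × nS) ℂ)
      = (U g : Matrix nR nR ℂ) ⊗ₖ (V g : Matrix nS nS ℂ))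
    (τ : Matrix nR nR ℂ) (σ : Matrix nS nS ℂ)
    (hτ : IsDensityMatrix τ) (hσ : IsDensityMatrix σ) :
    vnEntropy (Matrix.of fun p q : G × nR => ∑ s : nS,
        SigmaCRS U V τ σ (p.1, p.2, s) (q.1, q.2, s))
      + vnEntropy (Matrix.of fun p q : nR × nS => ∑ g : G,
        SigmaCRS U V τ σ (g, p.1, p.2) (g, q.1, q.2))
      - vnEntropy (SigmaCRS U V τ σ)
      - vnEntropy (Matrix.of fun r r' : nR => ∑ g : G, ∑ s : nS,
        SigmaCRS U V τ σ (g, r, s) (g, r', s))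
      = relEntAsym W (τ ⊗ₖ σ) - relEntAsym U τ := by
  have hτσ : (τ ⊗ₖ σ).IsHermitian := by
    rw [IsHermitian, conjTranspose_kronecker, hτ.1.1.eq, hσ.1.1.eq]
  have hτσ_trace : (τ ⊗ₖ σ).trace = 1 := by rw [trace_kronecker, hτ.2, hσ.2, mul_one]
  rw [sigmaCRS_marginal_CR U V τ hσ.2, sigmaCRS_marginal_RS U V τ W hW,
    sigmaCRS_marginal_R U V τ hσ.2, sigmaCRS_eq_reindex_blockDiagonal U V τ W hW,
    vnEntropy_reindex, vnEntropy_reindex,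
    vnEntropy_blockDiagonal_uniform_conj hτ.1.1 hτ.2 fun g => U g,
    vnEntropy_blockDiagonal_uniform_conj hτσ hτσ_trace fun g => W g, relEntAsym, relEntAsym]
  ring
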